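/- Normalization theorem for Call-by-Value: the unbiased strategy ⊳ is a normalizing strategy for →βv. That is: (a) a term is ⊳-normal if and only if it is βv-normal; and (b) if M →βv* N for some βv-normal N, then every maximal ⊳-sequence from M is finite and ends in a βv-normal form (indeed, by Random Descent, it ends in N). -/

import Mathlib

/-- Untyped λ-terms in de Bruijn representation. -/
inductive Tm : Type
  | var : ℕ → Tm
  | lam : Tm → Tm
  | app : Tm → Tm → Tm
deriving DecidableEq

namespace Tm

/-- Lift (shift by one) the free variables of index `≥ d`. -/
def lift (d : ℕ) : Tm → Tm
  | var n => if n < d then var n else var (n + 1)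
  | lam M => lam (lift (d + 1) M)
  | app M N => app (lift d M) (lift d N)

/-- Capture-avoiding substitution `M[N/k]` of `N` for the free variable `k` in `M`. -/
def subst : Tm → ℕ → Tm → Tm
  | var n, k, N => if n = k then N else if k < n then var (n - 1) else var n
  | lam M, k, N => lam (subst M (k + 1) (lift 0 N))
  | app M₁ M₂, k, N => app (subst M₁ k N) (subst M₂ k N)

end Tm

/-- Values: variables and abstractions. -/
inductive IsValue : Tm → Prop
  | var (n : ℕ) : IsValue (Tm.var n)
  | lam (M : Tm) : IsValue (Tm.lam M)

/-- βv-reduction: the closure of the root rule `(λx.M)V ↦βv M[V/x]` (for `V` a value)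
under arbitrary contexts. -/
inductive Betav : Tm → Tm → Prop
  | beta {M V} : IsValue V → Betav (Tm.app (Tm.lam M) V) (M.subst 0 V)
  | lam {M M'} : Betav M M' → Betav (Tm.lam M) (Tm.lam M')
  | appL {M M' N} : Betav M M' → Betav (Tm.app M N) (Tm.app M' N)
  | appR {M N N'} : Betav N N' → Betav (Tm.app M N) (Tm.app M N')

/-- Weak reduction: the closure of `↦βv` under weak contexts `W ::= ⟨⟩ | W M | M W`. -/
inductive Weakv : Tm → Tm → Prop
  | beta {M V} : IsValue V → Weakv (Tm.app (Tm.lam M) V) (M.subst 0 V)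
  | appL {M M' N} : Weakv M M' → Weakv (Tm.app M N) (Tm.app M' N)
  | appR {M N N'} : Weakv N N' → Weakv (Tm.app M N) (Tm.app M N')

/-- The unbiased strategy `⊳`: perform weak steps as long as possible; once the term has
no weak redex, iterate in the subterms (in arbitrary order). -/
inductive UnbV : Tm → Tm → Prop
  | weak {M M'} : Weakv M M' → UnbV M M'
  | lam {P P'} : (∀ s, ¬ Weakv (Tm.lam P) s) → UnbV P P' → UnbV (Tm.lam P) (Tm.lam P')
  | appL {P P' Q} : (∀ s, ¬ Weakv (Tm.app P Q) s) → UnbV P P' →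
      UnbV (Tm.app P Q) (Tm.app P' Q)
  | appR {P Q Q'} : (∀ s, ¬ Weakv (Tm.app P Q) s) → UnbV Q Q' →
      UnbV (Tm.app P Q) (Tm.app P Q')

/-- `M` is `r`-normal: it has no `r`-successor. -/
def NormalElt (r : Tm → Tm → Prop) (M : Tm) : Prop := ∀ N, ¬ r M N

/-- A maximal `r`-sequence from `M`, encoded as a stream that stabilizes on a normal
form in the finite case. -/
def MaxSeq (r : Tm → Tm → Prop) (M : Tm) (f : ℕ → Tm) : Prop :=
  f 0 = M ∧ ∀ n, r (f n) (f (n + 1)) ∨ (NormalElt r (f n) ∧ f (n + 1) = f n)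

/-! A βv-reduction sequence factorizes into weak steps followed by internal ones (steps under
a λ, or inside the components of a weak-normal application). This is proved with parallel
reduction, whose substitutivity is handled through simultaneous substitutions. Since `⊳`
performs weak steps first and only then internal ones, and a βv-normal term is weak-normal,
induction on the normal form `N` turns `M →βv* N` into `M ⊳* N`.

Moreover `⊳` has the diamond property: two distinct steps from a term close in one step each.
Hence every predecessor of a terminating term terminates, so all `⊳`-sequences from `M` are
finite, and by confluence the normal form they reach is `N`. -/

open Relation

namespace Tm

def upRen (r : ℕ → ℕ) : ℕ → ℕ
  | 0 => 0
  | n + 1 => r n + 1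

def rename (r : ℕ → ℕ) : Tm → Tm
  | var n => var (r n)
  | lam M => lam (rename (upRen r) M)
  | app M N => app (rename r M) (rename r N)

def up (σ : ℕ → Tm) : ℕ → Tm
  | 0 => var 0
  | n + 1 => rename Nat.succ (σ n)

def psubst (σ : ℕ → Tm) : Tm → Tm
  | var n => σ n
  | lam M => lam (psubst (up σ) M)
  | app M N => app (psubst σ M) (psubst σ N)

def scons (W : Tm) (σ : ℕ → Tm) : ℕ → Tm
  | 0 => W
  | n + 1 => σ n

theorem rename_congr {r r' : ℕ → ℕ} (h : ∀ n, r n = r' n) (M : Tm) :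
    M.rename r = M.rename r' := by
  induction M generalizing r r' with
  | var n => simp [rename, h]
  | lam M ih => exact congrArg lam (ih fun n => by cases n <;> simp [upRen, h])
  | app M N ihM ihN => simp [rename, ihM h, ihN h]

theorem psubst_congr {σ σ' : ℕ → Tm} (h : ∀ n, σ n = σ' n) (M : Tm) :
    M.psubst σ = M.psubst σ' := by
  induction M generalizing σ σ' with
  | var n => simp [psubst, h]
  | lam M ih => exact congrArg lam (ih fun n => by cases n <;> simp [up, h])
  | app M N ihM ihN => simp [psubst, ihM h, ihN h]

theorem rename_rename (r s : ℕ → ℕ) (M : Tm) :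
    (M.rename s).rename r = M.rename (r ∘ s) := by
  induction M generalizing r s with
  | var n => rfl
  | lam M ih =>
    simp only [rename, ih]
    exact congrArg lam (rename_congr (fun n => by cases n <;> rfl) M)
  | app M N ihM ihN => simp [rename, ihM, ihN]

theorem psubst_rename (σ : ℕ → Tm) (r : ℕ → ℕ) (M : Tm) :
    (M.rename r).psubst σ = M.psubst (σ ∘ r) := by
  induction M generalizing σ r with
  | var n => rfl
  | lam M ih =>
    simp only [rename, psubst, ih]
    exact congrArg lam (psubst_congr (fun n => by cases n <;> rfl) M)
  | app M N ihM ihN => simp [rename, psubst, ihM, ihN]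

theorem rename_psubst (r : ℕ → ℕ) (σ : ℕ → Tm) (M : Tm) :
    (M.psubst σ).rename r = M.psubst (rename r ∘ σ) := by
  induction M generalizing σ r with
  | var n => rfl
  | lam M ih =>
    simp only [rename, psubst, ih]
    refine congrArg lam (psubst_congr (fun n => ?_) M)
    cases n with
    | zero => rfl
    | succ n => simp only [Function.comp, up, rename_rename]; rfl
  | app M N ihM ihN => simp [rename, psubst, ihM, ihN]

theorem psubst_psubst (τ σ : ℕ → Tm) (M : Tm) :
    (M.psubst σ).psubst τ = M.psubst (psubst τ ∘ σ) := by
  induction M generalizing σ τ with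
  | var n => rfl
  | lam M ih =>
    simp only [psubst, ih]
    refine congrArg lam (psubst_congr (fun n => ?_) M)
    cases n with
    | zero => rfl
    | succ n => simp only [Function.comp, up, psubst_rename, rename_psubst]; rfl
  | app M N ihM ihN => simp [psubst, ihM, ihN]

theorem psubst_var (M : Tm) : M.psubst var = M := by
  induction M with
  | var n => rfl
  | lam M ih =>
    simp only [psubst]
    rw [psubst_congr (σ' := var) (fun n => by cases n <;> rfl) M, ih]
  | app M N ihM ihN => simp [psubst, ihM, ihN]

theorem lift_eq_rename (d : ℕ) (M : Tm) :
    M.lift d = M.rename fun n => if n < d then n else n + 1 := by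
  induction M generalizing d with
  | var n => simp only [lift, rename]; split <;> rfl
  | lam M ih =>
    simp only [lift, rename, ih]
    refine congrArg lam (rename_congr (fun n => ?_) M)
    cases n with
    | zero => simp [upRen]
    | succ n => simp only [upRen, Nat.succ_lt_succ_iff]; split <;> rfl
  | app M N ihM ihN => simp [lift, rename, ihM, ihN]

theorem subst_eq_psubst (M : Tm) (k : ℕ) (N : Tm) :
    M.subst k N = M.psubst fun n => if n = k then N else if k < n then var (n - 1) else var n := by
  induction M generalizing k N with
  | var n => simp [subst, psubst]
  | lam M ih =>
    simp only [subst, psubst, ih]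
    refine congrArg lam (psubst_congr (fun n => ?_) M)
    rcases n with _ | n
    · simp [up]
    rcases Nat.lt_trichotomy n k with h | rfl | h
    · simp [up, rename, h.ne, h.not_gt]
    · simp only [up, lift_eq_rename]
      exact rename_congr (fun m => by simp) N
    · simp [up, rename, h.ne', h, Nat.sub_add_cancel (Nat.one_le_of_lt h)]
  | app M N ihM ihN => simp [subst, psubst, ihM, ihN]

theorem subst_zero_eq_psubst (A B : Tm) : A.subst 0 B = A.psubst (scons B var) := by
  rw [subst_eq_psubst]
  exact psubst_congr (fun n => by cases n <;> simp [scons]) A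

theorem rename_subst_zero (r : ℕ → ℕ) (A B : Tm) :
    (A.subst 0 B).rename r = (A.rename (upRen r)).subst 0 (B.rename r) := by
  rw [subst_zero_eq_psubst, subst_zero_eq_psubst, rename_psubst, psubst_rename]
  exact psubst_congr (fun n => by cases n <;> rfl) A

theorem subst_zero_psubst_up (σ : ℕ → Tm) (A W : Tm) :
    (A.psubst (up σ)).subst 0 W = A.psubst (scons W σ) := by
  rw [subst_zero_eq_psubst, psubst_psubst]
  refine psubst_congr (fun n => ?_) A
  cases n with
  | zero => rfl
  | succ n => simp only [Function.comp, up, psubst_rename]; exact psubst_var _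

theorem psubst_subst_zero (σ : ℕ → Tm) (A B : Tm) :
    (A.subst 0 B).psubst σ = (A.psubst (up σ)).subst 0 (B.psubst σ) := by
  rw [subst_zero_psubst_up, subst_zero_eq_psubst, psubst_psubst]
  exact psubst_congr (fun n => by cases n <;> rfl) A

end Tm

theorem IsValue.rename {V : Tm} (hV : IsValue V) (r : ℕ → ℕ) : IsValue (V.rename r) := by
  cases hV <;> constructor

theorem IsValue.psubst {V : Tm} (hV : IsValue V) {σ : ℕ → Tm} (hσ : ∀ n, IsValue (σ n)) :
    IsValue (V.psubst σ) := by
  cases hV with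
  | var n => exact hσ n
  | lam M => exact .lam _

inductive ParBetav : Tm → Tm → Prop
  | var (n : ℕ) : ParBetav (Tm.var n) (Tm.var n)
  | lam {A A'} : ParBetav A A' → ParBetav (Tm.lam A) (Tm.lam A')
  | app {A A' B B'} : ParBetav A A' → ParBetav B B' → ParBetav (Tm.app A B) (Tm.app A' B')
  | beta {A A' B B'} : IsValue B → ParBetav A A' → ParBetav B B' →
      ParBetav (Tm.app (Tm.lam A) B) (A'.subst 0 B')

namespace ParBetav

protected theorem refl : ∀ M, ParBetav M M
  | .var n => .var n
  | .lam M => .lam (ParBetav.refl M)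
  | .app M N => .app (ParBetav.refl M) (ParBetav.refl N)

theorem isValue {B B' : Tm} (h : ParBetav B B') (hB : IsValue B) : IsValue B' := by
  cases hB <;> cases h <;> constructor

theorem rename {M M' : Tm} (h : ParBetav M M') (r : ℕ → ℕ) :
    ParBetav (M.rename r) (M'.rename r) := by
  induction h generalizing r with
  | var n => exact .var _
  | lam _ ih => exact .lam (ih _)
  | app _ _ ih₁ ih₂ => exact .app (ih₁ r) (ih₂ r)
  | beta hB _ _ ih₁ ih₂ =>
    rw [Tm.rename_subst_zero]
    exact .beta (hB.rename r) (ih₁ _) (ih₂ r)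

end ParBetav

def ParSubst (σ σ' : ℕ → Tm) : Prop := ∀ n, IsValue (σ n) ∧ ParBetav (σ n) (σ' n)

namespace ParSubst

variable {σ σ' : ℕ → Tm}

theorem var : ParSubst Tm.var Tm.var := fun n => ⟨.var n, .var n⟩

theorem up (hσ : ParSubst σ σ') : ParSubst (Tm.up σ) (Tm.up σ')
  | 0 => ⟨.var 0, .var 0⟩
  | n + 1 => ⟨(hσ n).1.rename _, (hσ n).2.rename _⟩

theorem scons {W W' : Tm} (hW : IsValue W) (hWW' : ParBetav W W') (hσ : ParSubst σ σ') :
    ParSubst (Tm.scons W σ) (Tm.scons W' σ')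
  | 0 => ⟨hW, hWW'⟩
  | n + 1 => hσ n

end ParSubst

namespace ParBetav

theorem psubst {M M' : Tm} (h : ParBetav M M') {σ σ' : ℕ → Tm} (hσ : ParSubst σ σ') :
    ParBetav (M.psubst σ) (M'.psubst σ') := by
  induction h generalizing σ σ' with
  | var n => exact (hσ n).2
  | lam _ ih => exact .lam (ih hσ.up)
  | app _ _ ih₁ ih₂ => exact .app (ih₁ hσ) (ih₂ hσ)
  | beta hB _ _ ih₁ ih₂ =>
    rw [Tm.psubst_subst_zero]
    exact .beta (hB.psubst fun n => (hσ n).1) (ih₁ hσ.up) (ih₂ hσ)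

theorem reflTransGen_betav {M N : Tm} (h : ParBetav M N) : ReflTransGen Betav M N := by
  have lam {A A'} (hA : ReflTransGen Betav A A') : ReflTransGen Betav (.lam A) (.lam A') :=
    ReflTransGen.lift Tm.lam (fun _ _ => Betav.lam) _ _ hA
  have app {A A' B B'} (hA : ReflTransGen Betav A A') (hB : ReflTransGen Betav B B') :
      ReflTransGen Betav (.app A B) (.app A' B') :=
    (ReflTransGen.lift (Tm.app · B) (fun _ _ => Betav.appL) _ _ hA).trans
      (ReflTransGen.lift (Tm.app A') (fun _ _ => Betav.appR) _ _ hB)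
  induction h with
  | var n => exact .refl
  | lam _ ih => exact lam ih
  | app _ _ ih₁ ih₂ => exact app ih₁ ih₂
  | beta hB _ hBB' ih₁ ih₂ => exact (app (lam ih₁) ih₂).tail (.beta (hBB'.isValue hB))

end ParBetav

theorem Betav.parBetav {M N : Tm} (h : Betav M N) : ParBetav M N := by
  induction h with
  | beta hV => exact .beta hV (.refl _) (.refl _)
  | lam _ ih => exact .lam ih
  | appL _ ih => exact .app ih (.refl _)
  | appR _ ih => exact .app (.refl _) ih

theorem reflTransGen_parBetav_iff {M N : Tm} :
    ReflTransGen ParBetav M N ↔ ReflTransGen Betav M N :=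
  ⟨reflTransGen_closed (fun _ _ => ParBetav.reflTransGen_betav) _ _,
    ReflTransGen.mono (fun _ _ => Betav.parBetav) _ _⟩

/-- Parallel reduction contracting no redex in weak position. -/
inductive InternalPar : Tm → Tm → Prop
  | var (n : ℕ) : InternalPar (Tm.var n) (Tm.var n)
  | lam {A A'} : ParBetav A A' → InternalPar (Tm.lam A) (Tm.lam A')
  | app {A A' B B'} : InternalPar A A' → InternalPar B B' →
      InternalPar (Tm.app A B) (Tm.app A' B')

theorem InternalPar.parBetav {M N : Tm} (h : InternalPar M N) : ParBetav M N := by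
  induction h with
  | var n => exact .var n
  | lam h => exact .lam h
  | app _ _ ih₁ ih₂ => exact .app ih₁ ih₂

theorem InternalPar.isValue_iff {B B' : Tm} (h : InternalPar B B') : IsValue B ↔ IsValue B' := by
  cases h with
  | var n => exact iff_of_true (.var n) (.var n)
  | lam _ => exact iff_of_true (.lam _) (.lam _)
  | app _ _ => exact iff_of_false (nomatch ·) (nomatch ·)

theorem ParBetav.internalPar_of_isValue {V V' : Tm} (h : ParBetav V V') (hV : IsValue V) :
    InternalPar V V' := by
  cases hV <;> cases h
  · exact .var _
  · exact .lam ‹_›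

theorem InternalPar.parBetav_of_weakv {M Q R : Tm} (hMQ : InternalPar M Q) (hQR : Weakv Q R) :
    ParBetav M R := by
  induction hQR generalizing M with
  | beta hV =>
    cases hMQ with
    | app hlam hB => cases hlam with
      | lam hA => exact .beta (hB.isValue_iff.2 hV) hA hB.parBetav
  | appL _ ih =>
    cases hMQ with
    | app hA hB => exact .app (ih hA) hB.parBetav
  | appR _ ih =>
    cases hMQ with
    | app hA hB => exact .app hA.parBetav (ih hB)

theorem reflTransGen_weakv_app {A A' B B' : Tm} (hA : ReflTransGen Weakv A A')
    (hB : ReflTransGen Weakv B B') : ReflTransGen Weakv (Tm.app A B) (Tm.app A' B') :=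
  (ReflTransGen.lift (Tm.app · B) (fun _ _ => Weakv.appL) _ _ hA).trans
    (ReflTransGen.lift (Tm.app A') (fun _ _ => Weakv.appR) _ _ hB)

/-- Stated for simultaneous substitutions so that the induction survives the weak redex
contracted in the `beta` case. -/
theorem ParBetav.exists_weakv_internalPar_psubst {C C' : Tm} (h : ParBetav C C')
    {σ σ' : ℕ → Tm} (hσ : ParSubst σ σ') :
    ∃ P, ReflTransGen Weakv (C.psubst σ) P ∧ InternalPar P (C'.psubst σ') := by
  induction h generalizing σ σ' with
  | var n => exact ⟨σ n, .refl, (hσ n).2.internalPar_of_isValue (hσ n).1⟩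
  | lam hA => exact ⟨_, .refl, .lam (hA.psubst hσ.up)⟩
  | app _ _ ih₁ ih₂ =>
    obtain ⟨P₁, hw₁, hi₁⟩ := ih₁ hσ
    obtain ⟨P₂, hw₂, hi₂⟩ := ih₂ hσ
    exact ⟨.app P₁ P₂, reflTransGen_weakv_app hw₁ hw₂, .app hi₁ hi₂⟩
  | beta hB _ hBB' ih₁ _ =>
    have hBσ : IsValue (Tm.psubst σ _) := hB.psubst fun n => (hσ n).1
    obtain ⟨P, hw, hi⟩ := ih₁ (.scons hBσ (hBB'.psubst hσ) hσ)
    refine ⟨P, .head (.beta hBσ) ?_, ?_⟩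
    · rwa [Tm.subst_zero_psubst_up]
    · rwa [Tm.psubst_subst_zero, Tm.subst_zero_psubst_up]

theorem ParBetav.exists_weakv_internalPar {M N : Tm} (h : ParBetav M N) :
    ∃ P, ReflTransGen Weakv M P ∧ InternalPar P N := by
  simpa only [Tm.psubst_var] using h.exists_weakv_internalPar_psubst .var

theorem InternalPar.exists_weakv_internalPar {X Y Z : Tm} (hXY : InternalPar X Y)
    (hYZ : ReflTransGen Weakv Y Z) : ∃ X', ReflTransGen Weakv X X' ∧ InternalPar X' Z := by
  induction hYZ using ReflTransGen.head_induction_on generalizing X with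
  | refl => exact ⟨X, .refl, hXY⟩
  | head hst _ ih =>
    obtain ⟨P, hw, hi⟩ := (hXY.parBetav_of_weakv hst).exists_weakv_internalPar
    obtain ⟨X', hw', hi'⟩ := ih hi
    exact ⟨X', hw.trans hw', hi'⟩

theorem exists_weakv_internalPar_of_betav {M N : Tm} (h : ReflTransGen Betav M N) :
    ∃ P, ReflTransGen Weakv M P ∧ ReflTransGen InternalPar P N := by
  replace h := reflTransGen_parBetav_iff.2 h
  induction h using ReflTransGen.head_induction_on with
  | refl => exact ⟨_, .refl, .refl⟩
  | head hst _ ih =>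
    obtain ⟨Q, hwQ, hiQ⟩ := ih
    obtain ⟨P, hwP, hiP⟩ := hst.exists_weakv_internalPar
    obtain ⟨Q', hw', hi'⟩ := hiP.exists_weakv_internalPar hwQ
    exact ⟨Q', hwP.trans hw', .head hi' hiQ⟩

theorem IsValue.normalElt_weakv {V : Tm} (hV : IsValue V) : NormalElt Weakv V := by
  intro _ h
  cases hV <;> cases h

theorem normalElt_weakv_app_iff {A B : Tm} :
    NormalElt Weakv (Tm.app A B) ↔
      NormalElt Weakv A ∧ NormalElt Weakv B ∧ ∀ C, A = Tm.lam C → ¬ IsValue B := by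
  refine ⟨fun h => ⟨fun _ hA => h _ (.appL hA), fun _ hB => h _ (.appR hB), ?_⟩, ?_⟩
  · rintro C rfl hB
    exact h _ (.beta hB)
  · rintro ⟨hA, hB, hAB⟩ _ (hV | hA' | hB')
    exacts [hAB _ rfl hV, hA _ hA', hB _ hB']

theorem Weakv.betav {M N : Tm} (h : Weakv M N) : Betav M N := by
  induction h with
  | beta hV => exact .beta hV
  | appL _ ih => exact .appL ih
  | appR _ ih => exact .appR ih

theorem UnbV.betav {M N : Tm} (h : UnbV M N) : Betav M N := by
  induction h with
  | weak h => exact h.betav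
  | lam _ _ ih => exact .lam ih
  | appL _ _ ih => exact .appL ih
  | appR _ _ ih => exact .appR ih

theorem NormalElt.of_betav {M : Tm} (h : NormalElt Betav M) : NormalElt Weakv M :=
  fun N hN => h N hN.betav

theorem UnbV.exists_lam_of_lam {A C : Tm} (h : UnbV A (Tm.lam C)) (hA : NormalElt Weakv A) :
    ∃ C₀, A = Tm.lam C₀ := by
  cases h with
  | weak h => exact absurd h (hA _)
  | lam _ _ => exact ⟨_, rfl⟩

theorem UnbV.isValue_of_isValue {B B' : Tm} (h : UnbV B B') (hB : NormalElt Weakv B)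
    (hB' : IsValue B') : IsValue B := by
  cases hB' with
  | var n => cases h with | weak h => exact absurd h (hB _)
  | lam C => obtain ⟨_, rfl⟩ := h.exists_lam_of_lam hB; exact .lam _

theorem UnbV.normalElt_weakv {M M' : Tm} (h : UnbV M M') (hM : NormalElt Weakv M) :
    NormalElt Weakv M' := by
  induction h with
  | weak h => exact absurd h (hM _)
  | lam _ _ _ => exact IsValue.normalElt_weakv (.lam _)
  | appL _ hA ih =>
    obtain ⟨nA, nB, hAB⟩ := normalElt_weakv_app_iff.1 hM
    refine normalElt_weakv_app_iff.2 ⟨ih nA, nB, fun C hC hV => ?_⟩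
    subst hC
    obtain ⟨C₀, rfl⟩ := hA.exists_lam_of_lam nA
    exact hAB C₀ rfl hV
  | appR _ hB ih =>
    obtain ⟨nA, nB, hAB⟩ := normalElt_weakv_app_iff.1 hM
    exact normalElt_weakv_app_iff.2
      ⟨nA, ih nB, fun C hC hV => hAB C hC (hB.isValue_of_isValue nB hV)⟩

theorem Weakv.diamond {M P Q : Tm} (hP : Weakv M P) (hQ : Weakv M Q) :
    P = Q ∨ ∃ R, Weakv P R ∧ Weakv Q R := by
  induction hP generalizing Q with
  | beta hV =>
    cases hQ with
    | beta _ => exact .inl rfl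
    | appL h => exact absurd h (IsValue.normalElt_weakv (.lam _) _)
    | appR h => exact absurd h (hV.normalElt_weakv _)
  | appL h ih =>
    cases hQ with
    | beta _ => exact absurd h (IsValue.normalElt_weakv (.lam _) _)
    | appL hQ =>
      obtain rfl | ⟨R, hPR, hQR⟩ := ih hQ
      exacts [.inl rfl, .inr ⟨_, .appL hPR, .appL hQR⟩]
    | appR hQ => exact .inr ⟨_, .appR hQ, .appL h⟩
  | appR h ih =>
    cases hQ with
    | beta hV => exact absurd h (hV.normalElt_weakv _)
    | appL hQ => exact .inr ⟨_, .appL hQ, .appR h⟩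
    | appR hQ =>
      obtain rfl | ⟨R, hPR, hQR⟩ := ih hQ
      exacts [.inl rfl, .inr ⟨_, .appR hPR, .appR hQR⟩]

theorem UnbV.diamond {M P Q : Tm} (hP : UnbV M P) (hQ : UnbV M Q) :
    P = Q ∨ ∃ R, UnbV P R ∧ UnbV Q R := by
  induction hP generalizing Q with
  | weak h =>
    cases hQ with
    | weak hQ =>
      obtain rfl | ⟨R, hPR, hQR⟩ := h.diamond hQ
      exacts [.inl rfl, .inr ⟨R, .weak hPR, .weak hQR⟩]
    | lam hM _ | appL hM _ | appR hM _ => exact absurd h (hM _)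
  | lam hM _ ih =>
    cases hQ with
    | weak hQ => exact absurd hQ (hM _)
    | lam _ hQ =>
      obtain rfl | ⟨R, hPR, hQR⟩ := ih hQ
      exacts [.inl rfl, .inr ⟨_, .lam (IsValue.normalElt_weakv (.lam _)) hPR,
        .lam (IsValue.normalElt_weakv (.lam _)) hQR⟩]
  | appL hM hA ih =>
    cases hQ with
    | weak hQ => exact absurd hQ (hM _)
    | appL _ hQ =>
      obtain rfl | ⟨R, hPR, hQR⟩ := ih hQ
      exacts [.inl rfl, .inr ⟨_, .appL ((UnbV.appL hM hA).normalElt_weakv hM) hPR,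
        .appL ((UnbV.appL hM hQ).normalElt_weakv hM) hQR⟩]
    | appR _ hQ =>
      exact .inr ⟨_, .appR ((UnbV.appL hM hA).normalElt_weakv hM) hQ,
        .appL ((UnbV.appR hM hQ).normalElt_weakv hM) hA⟩
  | appR hM hB ih =>
    cases hQ with
    | weak hQ => exact absurd hQ (hM _)
    | appL _ hQ =>
      exact .inr ⟨_, .appL ((UnbV.appR hM hB).normalElt_weakv hM) hQ,
        .appR ((UnbV.appL hM hQ).normalElt_weakv hM) hB⟩
    | appR _ hQ =>
      obtain rfl | ⟨R, hPR, hQR⟩ := ih hQ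
      exacts [.inl rfl, .inr ⟨_, .appR ((UnbV.appR hM hB).normalElt_weakv hM) hPR,
        .appR ((UnbV.appR hM hQ).normalElt_weakv hM) hQR⟩]

theorem Betav.exists_unbv {M N : Tm} (h : Betav M N) : ∃ M', UnbV M M' := by
  induction h with
  | beta hV => exact ⟨_, .weak (.beta hV)⟩
  | lam _ ih =>
    obtain ⟨_, h⟩ := ih
    exact ⟨_, .lam (IsValue.normalElt_weakv (.lam _)) h⟩
  | @appL A _ B _ ih =>
    by_cases hw : ∃ M', Weakv (.app A B) M'
    · obtain ⟨M', hw⟩ := hw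
      exact ⟨M', .weak hw⟩
    · obtain ⟨_, h⟩ := ih
      exact ⟨_, .appL (not_exists.1 hw) h⟩
  | @appR A B _ _ ih =>
    by_cases hw : ∃ M', Weakv (.app A B) M'
    · obtain ⟨M', hw⟩ := hw
      exact ⟨M', .weak hw⟩
    · obtain ⟨_, h⟩ := ih
      exact ⟨_, .appR (not_exists.1 hw) h⟩

theorem InternalPar.normalElt_weakv {X Y : Tm} (h : InternalPar X Y) (hY : NormalElt Weakv Y) :
    NormalElt Weakv X := by
  induction h with
  | var n => exact IsValue.normalElt_weakv (.var n)
  | lam _ => exact IsValue.normalElt_weakv (.lam _)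
  | app hA hB ihA ihB =>
    obtain ⟨nA, nB, hAB⟩ := normalElt_weakv_app_iff.1 hY
    refine normalElt_weakv_app_iff.2 ⟨ihA nA, ihB nB, ?_⟩
    rintro C rfl hV
    cases hA with
    | lam _ => exact hAB _ rfl (hB.isValue_iff.1 hV)

namespace InternalPar

variable {P : Tm}

theorem eq_var_of_reflTransGen {n : ℕ} (h : ReflTransGen InternalPar P (.var n)) :
    P = .var n := by
  generalize hN : Tm.var n = N at h
  induction h with
  | refl => rfl
  | tail _ hst ih => subst hN; cases hst; exact ih rfl

theorem exists_lam_of_reflTransGen {A₀ : Tm} (h : ReflTransGen InternalPar P (.lam A₀)) :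
    ∃ A, P = .lam A ∧ ReflTransGen Betav A A₀ := by
  generalize hN : Tm.lam A₀ = N at h
  induction h generalizing A₀ with
  | refl => exact ⟨A₀, hN.symm, .refl⟩
  | tail _ hst ih =>
    subst hN
    cases hst with
    | lam hA =>
      obtain ⟨A, rfl, hA'⟩ := ih rfl
      exact ⟨A, rfl, hA'.trans hA.reflTransGen_betav⟩

theorem exists_app_of_reflTransGen {A₀ B₀ : Tm}
    (h : ReflTransGen InternalPar P (.app A₀ B₀)) : ∃ A B, P = .app A B ∧
      ReflTransGen InternalPar A A₀ ∧ ReflTransGen InternalPar B B₀ := by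
  generalize hN : Tm.app A₀ B₀ = N at h
  induction h generalizing A₀ B₀ with
  | refl => exact ⟨A₀, B₀, hN.symm, .refl, .refl⟩
  | tail _ hst ih =>
    subst hN
    cases hst with
    | app hA hB =>
      obtain ⟨A, B, rfl, hA', hB'⟩ := ih rfl
      exact ⟨A, B, rfl, hA'.tail hA, hB'.tail hB⟩

theorem normalElt_weakv_of_reflTransGen {N : Tm} (h : ReflTransGen InternalPar P N)
    (hN : NormalElt Weakv N) : NormalElt Weakv P := by
  induction h using ReflTransGen.head_induction_on with
  | refl => exact hN
  | head hst _ ih => exact hst.normalElt_weakv ih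

end InternalPar

theorem reflTransGen_unbv_lam {A A' : Tm} (h : ReflTransGen UnbV A A') :
    ReflTransGen UnbV (.lam A) (.lam A') :=
  ReflTransGen.lift Tm.lam (fun _ _ => UnbV.lam (IsValue.normalElt_weakv (.lam _))) _ _ h

theorem reflTransGen_unbv_app {A A' B B' : Tm} (hA : ReflTransGen UnbV A A')
    (hB : ReflTransGen UnbV B B') (hAB : NormalElt Weakv (.app A B)) :
    ReflTransGen UnbV (.app A B) (.app A' B') := by
  induction hA using ReflTransGen.head_induction_on with
  | refl =>
    induction hB using ReflTransGen.head_induction_on with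
    | refl => exact .refl
    | head hst _ ih =>
      have step := UnbV.appR hAB hst
      exact .head step (ih (step.normalElt_weakv hAB))
  | head hst _ ih =>
    have step := UnbV.appL hAB hst
    exact .head step (ih (step.normalElt_weakv hAB))

theorem reflTransGen_unbv_of_weakv {M N : Tm} (h : ReflTransGen Weakv M N) :
    ReflTransGen UnbV M N :=
  ReflTransGen.mono (fun _ _ => UnbV.weak) _ _ h

/-- Under a λ the reduction is arbitrary, so it is factorized again. -/
theorem reflTransGen_unbv_of_internalPar {P N : Tm} (hN : NormalElt Betav N)
    (h : ReflTransGen InternalPar P N) : ReflTransGen UnbV P N := by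
  induction N generalizing P with
  | var n => rw [InternalPar.eq_var_of_reflTransGen h]
  | lam A₀ ih =>
    obtain ⟨A, rfl, hA⟩ := InternalPar.exists_lam_of_reflTransGen h
    obtain ⟨Q, hAQ, hQA₀⟩ := exists_weakv_internalPar_of_betav hA
    exact reflTransGen_unbv_lam
      ((reflTransGen_unbv_of_weakv hAQ).trans (ih (fun _ h => hN _ (.lam h)) hQA₀))
  | app A₀ B₀ ihA ihB =>
    have hP := InternalPar.normalElt_weakv_of_reflTransGen h hN.of_betav
    obtain ⟨A, B, rfl, hA, hB⟩ := InternalPar.exists_app_of_reflTransGen h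
    exact reflTransGen_unbv_app (ihA (fun _ h => hN _ (.appL h)) hA)
      (ihB (fun _ h => hN _ (.appR h)) hB) hP

theorem reflTransGen_unbv_of_betav {M N : Tm} (hN : NormalElt Betav N)
    (h : ReflTransGen Betav M N) : ReflTransGen UnbV M N := by
  obtain ⟨P, hMP, hPN⟩ := exists_weakv_internalPar_of_betav h
  exact (reflTransGen_unbv_of_weakv hMP).trans (reflTransGen_unbv_of_internalPar hN hPN)

section RandomDescent

variable {α : Type*} {r : α → α → Prop}

/-- Under the diamond property all reduction paths between two elements have the same length,
which is why termination propagates backwards along a step. -/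
theorem acc_of_diamond (hr : ∀ a b c, r a b → r a c → b = c ∨ ∃ d, r b d ∧ r c d)
    {a b : α} (hab : r a b) (hb : Acc (flip r) b) : Acc (flip r) a := by
  induction hb generalizing a with
  | intro b hb ih =>
    refine .intro a fun a' haa' => ?_
    obtain rfl | ⟨d, ha'd, hbd⟩ := hr _ _ _ haa' hab
    exacts [.intro _ hb, ih d hbd ha'd]

theorem acc_of_reflTransGen_of_diamond
    (hr : ∀ a b c, r a b → r a c → b = c ∨ ∃ d, r b d ∧ r c d) {a b : α}
    (hab : ReflTransGen r a b) (hb : ∀ c, ¬ r b c) : Acc (flip r) a := by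
  induction hab using ReflTransGen.head_induction_on with
  | refl => exact .intro b fun c hc => absurd hc (hb c)
  | head hac _ ih => exact acc_of_diamond hr hac ih

theorem eq_of_reflTransGen_of_diamond
    (hr : ∀ a b c, r a b → r a c → b = c ∨ ∃ d, r b d ∧ r c d) {a b c : α}
    (hab : ReflTransGen r a b) (hac : ReflTransGen r a c) (hb : ∀ d, ¬ r b d)
    (hc : ∀ d, ¬ r c d) : b = c := by
  have hr' (a b c : α) (hab : r a b) (hac : r a c) :
      ∃ d, ReflGen r b d ∧ ReflTransGen r c d := by
    obtain rfl | ⟨d, hbd, hcd⟩ := hr a b c hab hac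
    exacts [⟨b, .refl, .refl⟩, ⟨d, .single hbd, .single hcd⟩]
  obtain ⟨d, hbd, hcd⟩ := church_rosser hr' hab hac
  rw [reflTransGen_iff_eq hb] at hbd
  rw [reflTransGen_iff_eq hc] at hcd
  exact hbd.symm.trans hcd

end RandomDescent

theorem MaxSeq.exists_normalElt {r : Tm → Tm → Prop} {M : Tm} {f : ℕ → Tm}
    (hf : MaxSeq r M f) (hM : Acc (flip r) M) :
    ∃ n, NormalElt r (f n) ∧ ReflTransGen r M (f n) := by
  induction hM generalizing f with
  | intro M _ ih =>
    obtain ⟨rfl, hstep⟩ := hf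
    rcases hstep 0 with h0 | ⟨h0, -⟩
    · obtain ⟨n, hn, hreach⟩ :=
        ih (f 1) h0 (f := fun n => f (n + 1)) ⟨rfl, fun n => hstep (n + 1)⟩
      exact ⟨n + 1, hn, .head h0 hreach⟩
    · exact ⟨0, h0, .refl⟩

/-- **Normalization theorem for Call-by-Value**: the unbiased strategy `⊳` is a
normalizing strategy for `→βv`.
(a) a term is `⊳`-normal iff it is βv-normal;
(b) if `M →βv* N` with `N` βv-normal, then every maximal `⊳`-sequence from `M` is
    finite and ends in a βv-normal form — indeed, by Random Descent, it ends in `N`. -/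
theorem cbv_normalization :
    (∀ M : Tm, NormalElt UnbV M ↔ NormalElt Betav M) ∧
    (∀ M N : Tm, NormalElt Betav N → Relation.ReflTransGen Betav M N →
      ∀ f : ℕ → Tm, MaxSeq UnbV M f → ∃ n, NormalElt UnbV (f n) ∧ f n = N) := by
  have normal_iff (M : Tm) : NormalElt UnbV M ↔ NormalElt Betav M :=
    ⟨fun hM _ h => h.exists_unbv.elim hM, fun hM _ h => hM _ h.betav⟩
  have diamond (a b c : Tm) : UnbV a b → UnbV a c → b = c ∨ ∃ d, UnbV b d ∧ UnbV c d :=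
    UnbV.diamond
  refine ⟨normal_iff, fun M N hN hMN f hf => ?_⟩
  have hNu := (normal_iff N).2 hN
  have hMNu := reflTransGen_unbv_of_betav hN hMN
  obtain ⟨n, hn, hMn⟩ := hf.exists_normalElt (acc_of_reflTransGen_of_diamond diamond hMNu hNu)
  exact ⟨n, hn, eq_of_reflTransGen_of_diamond diamond hMn hMNu hn hNu⟩
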